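/- Let (X_τ)_{τ∈ℤ} be a two-sided stationary Markov chain on {1,…,d} with transition matrix P₀ and marginal law π₀, assumed in the form: for all σ ∈ ℤ, n ≥ 0 and functions f,g : {1,…,d} → ℝ, E[f(X_σ) g(X_{σ+n})] = Σ_x π₀(x) f(x) (P₀ⁿ g)(x). Let ℰ be a d×d real matrix and ε_k(x) = ℰ(x,k). Fix ρ ∈ (0,1), σ_ζ² > 0, an integer m ≥ 1, and θ ∈ ℝ, and set ϱ = ρᵐ e^{−iθ}. Then for all k, l ∈ {1,…,d}, the two-sided series S^{kl}(θ) := Σ_{τ∈ℤ} E[ε_k(X_0) ε_l(X_τ)] · σ_ζ² ρ^{m|τ|} e^{−iτθ} converges absolutely, and S^{kl}(θ) = σ_ζ² ( ⟨ε_k, U_ϱ ε_l⟩ + ⟨ε_l, U_ϱ ε_k⟩* − ⟨ε_k, ε_l⟩ ), where * denotes complex conjugation. -/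

import Mathlib

/-!
For `τ = n ≥ 0` stationarity gives `E[ε_k(X_0) ε_l(X_n)] = ⟨ε_k, P₀ⁿ ε_l⟩` and the weight
`ρ^{m|τ|} e^{-iτθ}` equals `ϱⁿ`; for `τ = -n` it gives `⟨ε_l, P₀ⁿ ε_k⟩`, a real number, against the
weight `ϱ̄ⁿ`. Powers of a stochastic matrix have entries in `[0, 1]`, so both half-line series are
dominated by the geometric series in `‖ϱ‖ = ρᵐ < 1`; they sum to `⟨ε_k, U_ϱ ε_l⟩` and
`⟨ε_l, U_ϱ ε_k⟩*`, and the term `τ = 0`, counted in both, is `⟨ε_k, ε_l⟩`.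
-/

open MeasureTheory Matrix

/-- The bilinear pairing `⟨f,g⟩ = Σ_x π₀(x) f(x) g(x)`, extended bilinearly (without
conjugation) to complex-valued functions. -/
noncomputable def pairing (d : ℕ) (π₀ : Fin d → ℝ) (f g : Fin d → ℂ) : ℂ :=
  ∑ x, (π₀ x : ℂ) * f x * g x

/-- The resolvent `U_ϱ = Σ_{n=0}^∞ ϱⁿ P₀ⁿ` applied to a function `g`. -/
noncomputable def resolventApply (d : ℕ) (P₀ : Matrix (Fin d) (Fin d) ℝ) (ϱ : ℂ)
    (g : Fin d → ℂ) : Fin d → ℂ :=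
  fun x => ∑' n : ℕ, ϱ ^ n * ∑ y, ((P₀ ^ n) x y : ℂ) * g y

section Resolvent

variable {d : ℕ} {P : Matrix (Fin d) (Fin d) ℝ} {ϱ : ℂ}

theorem hasSum_resolventApply (hP : P ∈ rowStochastic ℝ (Fin d)) (hϱ : ‖ϱ‖ < 1)
    (g : Fin d → ℂ) (x : Fin d) :
    HasSum (fun n : ℕ => ϱ ^ n * ∑ y, ((P ^ n) x y : ℂ) * g y) (resolventApply d P ϱ g x) := by
  refine Summable.hasSum <| Summable.of_norm_bounded
    ((summable_geometric_of_lt_one (norm_nonneg _) hϱ).mul_right (∑ y, ‖g y‖)) fun n => ?_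
  have hPn : P ^ n ∈ rowStochastic ℝ (Fin d) := pow_mem hP n
  rw [norm_mul, norm_pow]
  gcongr
  refine (norm_sum_le _ _).trans <| Finset.sum_le_sum fun y _ => ?_
  rw [norm_mul, Complex.norm_real, Real.norm_of_nonneg (nonneg_of_mem_rowStochastic hPn)]
  exact mul_le_of_le_one_left (norm_nonneg _) (le_one_of_mem_rowStochastic hPn)

theorem ofReal_sum_mul_mulVec (π₀ f g : Fin d → ℝ) (n : ℕ) :
    ((∑ x, π₀ x * f x * (P ^ n *ᵥ g) x : ℝ) : ℂ) =
      pairing d π₀ (fun x => (f x : ℂ)) (fun x => ∑ y, ((P ^ n) x y : ℂ) * g y) := by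
  simp only [pairing, mulVec, dotProduct]
  push_cast
  rfl

theorem hasSum_correlation_resolvent (hP : P ∈ rowStochastic ℝ (Fin d)) (hϱ : ‖ϱ‖ < 1)
    (π₀ f g : Fin d → ℝ) :
    HasSum (fun n : ℕ => ϱ ^ n * ((∑ x, π₀ x * f x * (P ^ n *ᵥ g) x : ℝ) : ℂ))
      (pairing d π₀ (fun x => (f x : ℂ)) (resolventApply d P ϱ (fun x => (g x : ℂ)))) := by
  refine (hasSum_sum fun x _ => (hasSum_resolventApply hP hϱ (fun y => (g y : ℂ)) x).mul_left
    ((π₀ x : ℂ) * f x)).congr_fun fun n => ?_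
  rw [ofReal_sum_mul_mulVec, pairing, Finset.mul_sum]
  exact Finset.sum_congr rfl fun x _ => by ring

end Resolvent

theorem norm_ofReal_pow_mul_exp_lt_one {ρ : ℝ} (hρ : ρ ∈ Set.Ico (0 : ℝ) 1) {m : ℕ}
    (hm : m ≠ 0) (θ : ℝ) : ‖(ρ : ℂ) ^ m * Complex.exp (-(θ : ℂ) * Complex.I)‖ < 1 := by
  rw [norm_mul, norm_pow, Complex.norm_real, Real.norm_of_nonneg hρ.1, ← Complex.ofReal_neg,
    Complex.norm_exp_ofReal_mul_I, mul_one]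
  exact pow_lt_one₀ hρ.1 hρ.2 hm

section TwoSided

variable (ρ : ℝ) (m : ℕ) (θ : ℝ)

theorem ofReal_pow_natAbs_mul_exp_natCast (n : ℕ) :
    (ρ : ℂ) ^ (m * (n : ℤ).natAbs) * Complex.exp (-((n : ℤ) : ℂ) * θ * Complex.I) =
      ((ρ : ℂ) ^ m * Complex.exp (-(θ : ℂ) * Complex.I)) ^ n := by
  rw [mul_pow, ← pow_mul, ← Complex.exp_nat_mul, Int.natAbs_natCast]
  push_cast
  ring_nf

theorem ofReal_pow_natAbs_mul_exp_neg_natCast (n : ℕ) :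
    (ρ : ℂ) ^ (m * (-(n : ℤ)).natAbs) * Complex.exp (-((-(n : ℤ) : ℤ) : ℂ) * θ * Complex.I) =
      star ((ρ : ℂ) ^ m * Complex.exp (-(θ : ℂ) * Complex.I)) ^ n := by
  rw [star_mul', star_pow, Complex.star_def, Complex.conj_ofReal, ← Complex.exp_conj, mul_pow,
    ← pow_mul, ← Complex.exp_nat_mul, Int.natAbs_neg, Int.natAbs_natCast]
  simp only [map_mul, map_neg, Complex.conj_ofReal, Complex.conj_I]
  push_cast
  ring_nf

theorem hasSum_int_mul_geometric_weight {c : ℤ → ℝ} {A B : ℂ}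
    (hA : HasSum (fun n : ℕ => ((ρ : ℂ) ^ m * Complex.exp (-(θ : ℂ) * Complex.I)) ^ n * c n) A)
    (hB : HasSum (fun n : ℕ => ((ρ : ℂ) ^ m * Complex.exp (-(θ : ℂ) * Complex.I)) ^ n * c (-n)) B) :
    HasSum (fun τ : ℤ => (c τ : ℂ) * (ρ : ℂ) ^ (m * τ.natAbs) *
        Complex.exp (-(τ : ℂ) * θ * Complex.I)) (A + star B - c 0) := by
  have h := HasSum.of_nat_of_neg (f := fun τ : ℤ => (c τ : ℂ) * (ρ : ℂ) ^ (m * τ.natAbs) *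
    Complex.exp (-(τ : ℂ) * θ * Complex.I)) (g := A) (g' := star B) ?_ ?_
  · simpa using h
  · refine hA.congr_fun fun n => ?_
    rw [mul_assoc, ofReal_pow_natAbs_mul_exp_natCast, mul_comm]
  · refine hB.star.congr_fun fun n => ?_
    rw [mul_assoc, ofReal_pow_natAbs_mul_exp_neg_natCast, mul_comm]
    simp only [star_mul', star_pow, Complex.star_def, Complex.conj_ofReal]

end TwoSided

theorem stmt4_general {Ω : Type*} {mΩ : MeasurableSpace Ω} (μ : Measure Ω)
    (d : ℕ) (P₀ : Matrix (Fin d) (Fin d) ℝ) (π₀ : Fin d → ℝ)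
    (hPnonneg : ∀ x x', 0 ≤ P₀ x x') (hProw : ∀ x, ∑ x', P₀ x x' = 1)
    (X : ℤ → Ω → Fin d)
    (hstat : ∀ (σ : ℤ) (n : ℕ) (f g : Fin d → ℝ),
      ∫ ω, f (X σ ω) * g (X (σ + n) ω) ∂μ = ∑ x, π₀ x * f x * (P₀ ^ n).mulVec g x)
    (ℰ : Matrix (Fin d) (Fin d) ℝ)
    (ρ : ℝ) (hρ : ρ ∈ Set.Ioo (0:ℝ) 1) (σζsq : ℝ)
    (m : ℕ) (hm : 1 ≤ m) (θ : ℝ)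
    (ϱ : ℂ) (hϱ : ϱ = (ρ : ℂ) ^ m * Complex.exp (-(θ : ℂ) * Complex.I)) :
    ∀ k l : Fin d,
      Summable (fun τ : ℤ =>
        ‖((∫ ω, ℰ (X 0 ω) k * ℰ (X τ ω) l ∂μ : ℝ) : ℂ) * (σζsq : ℂ) *
          (ρ : ℂ) ^ (m * τ.natAbs) * Complex.exp (-(τ : ℂ) * (θ : ℂ) * Complex.I)‖) ∧
      ∑' τ : ℤ, ((∫ ω, ℰ (X 0 ω) k * ℰ (X τ ω) l ∂μ : ℝ) : ℂ) * (σζsq : ℂ) *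
          (ρ : ℂ) ^ (m * τ.natAbs) * Complex.exp (-(τ : ℂ) * (θ : ℂ) * Complex.I) =
        (σζsq : ℂ) *
          (pairing d π₀ (fun x => (ℰ x k : ℂ))
              (resolventApply d P₀ ϱ (fun x => (ℰ x l : ℂ))) +
            star (pairing d π₀ (fun x => (ℰ x l : ℂ))
              (resolventApply d P₀ ϱ (fun x => (ℰ x k : ℂ)))) -
            pairing d π₀ (fun x => (ℰ x k : ℂ)) (fun x => (ℰ x l : ℂ))) := by
  intro k l
  subst hϱ
  have hP : P₀ ∈ rowStochastic ℝ (Fin d) := mem_rowStochastic_iff_sum.2 ⟨hPnonneg, hProw⟩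
  have hϱ1 := norm_ofReal_pow_mul_exp_lt_one (Set.Ioo_subset_Ico_self hρ) (by omega : m ≠ 0) θ
  set C : ℤ → ℝ := fun τ => ∫ ω, ℰ (X 0 ω) k * ℰ (X τ ω) l ∂μ
  have hC_nat (n : ℕ) : C n = ∑ x, π₀ x * ℰ x k * (P₀ ^ n *ᵥ fun y => ℰ y l) x := by
    simpa using hstat 0 n (fun x => ℰ x k) (fun x => ℰ x l)
  have hC_neg (n : ℕ) : C (-n) = ∑ x, π₀ x * ℰ x l * (P₀ ^ n *ᵥ fun y => ℰ y k) x := by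
    have h := hstat (-n) n (fun x => ℰ x l) (fun x => ℰ x k)
    simp only [neg_add_cancel] at h
    simp only [C, ← h, mul_comm]
  have hC_zero : (C 0 : ℂ) = pairing d π₀ (fun x => (ℰ x k : ℂ)) (fun x => (ℰ x l : ℂ)) := by
    have h := hC_nat 0
    rw [Nat.cast_zero, pow_zero, one_mulVec] at h
    rw [h, pairing]
    push_cast
    rfl
  have hS := (hasSum_int_mul_geometric_weight ρ m θ (c := C)
    ((hasSum_correlation_resolvent hP hϱ1 π₀ (fun x => ℰ x k) (fun x => ℰ x l)).congr_fun
      fun n => by rw [hC_nat])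
    ((hasSum_correlation_resolvent hP hϱ1 π₀ (fun x => ℰ x l) (fun x => ℰ x k)).congr_fun
      fun n => by rw [hC_neg])).mul_left (σζsq : ℂ)
  rw [hC_zero] at hS
  replace hS : HasSum (fun τ : ℤ => (C τ : ℂ) * σζsq * (ρ : ℂ) ^ (m * τ.natAbs) *
      Complex.exp (-(τ : ℂ) * θ * Complex.I)) _ := hS.congr_fun fun τ => by ring
  exact ⟨summable_norm_iff.mpr hS.summable, hS.tsum_eq⟩

/-- **Proposition 2.**  For the stationary chain `(X_τ)` and input autocorrelation
`R_ζ(n) = σ_ζ² ρⁿ`, subsampled by the super-sampling factor `m`, the two-sided series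
`S^{kl}(θ) = Σ_τ E[ε_k(X_0) ε_l(X_τ)] σ_ζ² ρ^{m|τ|} e^{−iτθ}` converges absolutely and equals
`σ_ζ² (⟨ε_k, U_ϱ ε_l⟩ + ⟨ε_l, U_ϱ ε_k⟩* − ⟨ε_k, ε_l⟩)` with `ϱ = ρᵐ e^{−iθ}`. -/
theorem stmt4 {Ω : Type*} {mΩ : MeasurableSpace Ω} (μ : Measure Ω) [IsProbabilityMeasure μ]
    (d : ℕ) (P₀ : Matrix (Fin d) (Fin d) ℝ) (π₀ : Fin d → ℝ)
    (hPnonneg : ∀ x x', 0 ≤ P₀ x x') (hProw : ∀ x, ∑ x', P₀ x x' = 1)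
    (hπnonneg : ∀ x, 0 ≤ π₀ x) (hπsum : ∑ x, π₀ x = 1)
    (hπinv : ∀ x', ∑ x, π₀ x * P₀ x x' = π₀ x')
    (X : ℤ → Ω → Fin d) (hXmeas : ∀ τ, Measurable (X τ))
    (hstat : ∀ (σ : ℤ) (n : ℕ) (f g : Fin d → ℝ),
      ∫ ω, f (X σ ω) * g (X (σ + n) ω) ∂μ = ∑ x, π₀ x * f x * (P₀ ^ n).mulVec g x)
    (ℰ : Matrix (Fin d) (Fin d) ℝ)
    (ρ : ℝ) (hρ : ρ ∈ Set.Ioo (0:ℝ) 1) (σζsq : ℝ) (hσζ : 0 < σζsq)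
    (m : ℕ) (hm : 1 ≤ m) (θ : ℝ)
    (ϱ : ℂ) (hϱ : ϱ = (ρ : ℂ) ^ m * Complex.exp (-(θ : ℂ) * Complex.I)) :
    ∀ k l : Fin d,
      Summable (fun τ : ℤ =>
        ‖((∫ ω, ℰ (X 0 ω) k * ℰ (X τ ω) l ∂μ : ℝ) : ℂ) * (σζsq : ℂ) *
          (ρ : ℂ) ^ (m * τ.natAbs) * Complex.exp (-(τ : ℂ) * (θ : ℂ) * Complex.I)‖) ∧
      ∑' τ : ℤ, ((∫ ω, ℰ (X 0 ω) k * ℰ (X τ ω) l ∂μ : ℝ) : ℂ) * (σζsq : ℂ) *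
          (ρ : ℂ) ^ (m * τ.natAbs) * Complex.exp (-(τ : ℂ) * (θ : ℂ) * Complex.I) =
        (σζsq : ℂ) *
          (pairing d π₀ (fun x => (ℰ x k : ℂ))
              (resolventApply d P₀ ϱ (fun x => (ℰ x l : ℂ))) +
            star (pairing d π₀ (fun x => (ℰ x l : ℂ))
              (resolventApply d P₀ ϱ (fun x => (ℰ x k : ℂ)))) -
            pairing d π₀ (fun x => (ℰ x k : ℂ)) (fun x => (ℰ x l : ℂ))) :=
  stmt4_general (mΩ := mΩ) μ d P₀ π₀ hPnonneg hProw X hstat ℰ ρ hρ σζsq m hm θ ϱ hϱ
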